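/- Let n ≥ 4 and let U₊ be the standard half-space bubble. Set G_tan := ∫_{ℝⁿ₊} t·‖∇′U₊‖² dy′ dt, G := ∫_{ℝⁿ₊} t·‖∇U₊‖² dy′ dt, and Θ := ∫_{ℝ^{n−1}} (1+‖y′‖²)^{−(n−2)} dy′. Then (2/(n−1))·G_tan − G + ((n−2)/2)·Θ = ((n−2)²/(2(n−1)))·Θ, and this quantity is strictly positive. -/

import Mathlib

open MeasureTheory

/-- The standard half-space bubble `U₊(y′,t) = (‖y′‖² + (1+t)²)^{-(n-2)/2}`. -/
noncomputable def Uplus (n : ℕ) (y : EuclideanSpace ℝ (Fin (n - 1))) (t : ℝ) : ℝ :=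
  (‖y‖ ^ 2 + (1 + t) ^ 2) ^ (-(((n : ℝ) - 2) / 2))

/-- Squared norm of the tangential gradient `∇′U₊`. -/
noncomputable def tanGradSq (n : ℕ) (y : EuclideanSpace ℝ (Fin (n - 1))) (t : ℝ) : ℝ :=
  ‖fderiv ℝ (fun y' => Uplus n y' t) y‖ ^ 2

/-- Square of the normal derivative `∂ₜU₊`. -/
noncomputable def normDerSq (n : ℕ) (y : EuclideanSpace ℝ (Fin (n - 1))) (t : ℝ) : ℝ :=
  (deriv (fun t' => Uplus n y t') t) ^ 2

/-- Squared norm of the full gradient `∇U₊ = (∇′U₊, ∂ₜU₊)`. -/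
noncomputable def gradSq (n : ℕ) (y : EuclideanSpace ℝ (Fin (n - 1))) (t : ℝ) : ℝ :=
  tanGradSq n y t + normDerSq n y t

open Real

lemma tanGradSq_eq (n : ℕ) (y : EuclideanSpace ℝ (Fin (n - 1))) {t : ℝ} (ht : 0 < t) :
    tanGradSq n y t
      = ((n : ℝ) - 2) ^ 2 * ‖y‖ ^ 2 * (‖y‖ ^ 2 + (1 + t) ^ 2) ^ (-(n : ℝ)) := by
  set s : ℝ := ‖y‖ ^ 2 + (1 + t) ^ 2 with hs
  have hspos : 0 < s := by positivity
  set p : ℝ := -(((n : ℝ) - 2) / 2) with hp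
  have hinner : HasFDerivAt (fun y' : EuclideanSpace ℝ (Fin (n - 1)) => ‖y'‖ ^ 2 + (1 + t) ^ 2)
      ((2 : ℝ) • (innerSL ℝ y)) y := by
    have h1 : HasFDerivAt (fun y' : EuclideanSpace ℝ (Fin (n - 1)) => ‖y'‖ ^ 2)
        ((2 : ℝ) • (innerSL ℝ y)) y := by
      have := (hasFDerivAt_id y).norm_sq
      rw [← Nat.cast_smul_eq_nsmul ℝ] at this
      simpa using this
    simpa using h1.add_const ((1 + t) ^ 2)
  have hr : HasDerivAt (fun u : ℝ => u ^ p) (p * s ^ (p - 1)) s :=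
    Real.hasDerivAt_rpow_const (Or.inl hspos.ne')
  have hcomp : HasFDerivAt (fun y' : EuclideanSpace ℝ (Fin (n - 1)) => Uplus n y' t)
      ((p * s ^ (p - 1)) • ((2 : ℝ) • (innerSL ℝ y))) y := by
    have := hr.comp_hasFDerivAt y hinner
    simpa [Uplus, Function.comp_def] using this
  have hfd : fderiv ℝ (fun y' => Uplus n y' t) y = (p * s ^ (p - 1)) • ((2 : ℝ) • (innerSL ℝ y)) :=
    hcomp.fderiv
  rw [tanGradSq, hfd]
  rw [norm_smul, norm_smul, innerSL_apply_norm]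
  have hnorm : (‖p * s ^ (p - 1)‖ * (‖(2:ℝ)‖ * ‖y‖)) ^ 2
      = p ^ 2 * (s ^ (p-1)) ^ 2 * (4 * ‖y‖ ^ 2) := by
    rw [Real.norm_eq_abs, Real.norm_eq_abs]
    rw [mul_pow, mul_pow, sq_abs, sq_abs, mul_pow]
    norm_num
  rw [hnorm]
  have hsq : (s ^ (p - 1)) ^ 2 = s ^ (-(n:ℝ)) := by
    rw [← Real.rpow_natCast (s ^ (p - 1)) 2, ← Real.rpow_mul hspos.le]
    norm_num [hp]
    ring_nf
    rw [Real.rpow_neg hspos.le, Real.rpow_natCast, inv_pow]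
  rw [hsq, hp]
  ring

lemma normDerSq_eq (n : ℕ) (y : EuclideanSpace ℝ (Fin (n - 1))) {t : ℝ} (ht : 0 < t) :
    normDerSq n y t
      = ((n : ℝ) - 2) ^ 2 * (1 + t) ^ 2 * (‖y‖ ^ 2 + (1 + t) ^ 2) ^ (-(n : ℝ)) := by
  set s : ℝ := ‖y‖ ^ 2 + (1 + t) ^ 2 with hs
  have hspos : 0 < s := by positivity
  set p : ℝ := -(((n : ℝ) - 2) / 2) with hp
  have hinner : HasDerivAt (fun t' : ℝ => ‖y‖ ^ 2 + (1 + t') ^ 2) (2 * (1 + t)) t := by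
    have h1 : HasDerivAt (fun t' : ℝ => (1 + t')) 1 t := by
      simpa using (hasDerivAt_id t).const_add (1 : ℝ)
    have h2 := h1.pow 2
    simpa using h2.const_add (‖y‖ ^ 2)
  have hr : HasDerivAt (fun u : ℝ => u ^ p) (p * s ^ (p - 1)) s :=
    Real.hasDerivAt_rpow_const (Or.inl hspos.ne')
  have hcomp : HasDerivAt (fun t' : ℝ => Uplus n y t')
      (p * s ^ (p - 1) * (2 * (1 + t))) t := by
    have := hr.comp t hinner
    simpa [Uplus, Function.comp_def] using this
  rw [normDerSq, hcomp.deriv]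
  have hsq : (s ^ (p - 1)) ^ 2 = s ^ (-(n:ℝ)) := by
    rw [← Real.rpow_natCast (s ^ (p - 1)) 2, ← Real.rpow_mul hspos.le]
    norm_num [hp]
    ring_nf
    rw [Real.rpow_neg hspos.le, Real.rpow_natCast, inv_pow]
  calc (p * s ^ (p - 1) * (2 * (1 + t))) ^ 2
      = (4 * p ^ 2) * (1 + t) ^ 2 * (s ^ (p - 1)) ^ 2 := by ring
    _ = ((n : ℝ) - 2) ^ 2 * (1 + t) ^ 2 * s ^ (-(n:ℝ)) := by rw [hsq, hp]; ring

lemma gradSq_eq (n : ℕ) (y : EuclideanSpace ℝ (Fin (n - 1))) {t : ℝ} (ht : 0 < t) :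
    tanGradSq n y t + normDerSq n y t
      = ((n : ℝ) - 2) ^ 2 * (‖y‖ ^ 2 + (1 + t) ^ 2) ^ (1 - (n : ℝ)) := by
  rw [tanGradSq_eq n y ht, normDerSq_eq n y ht]
  set s : ℝ := ‖y‖ ^ 2 + (1 + t) ^ 2 with hs
  have hspos : 0 < s := by positivity
  have h1 : s ^ (1 - (n:ℝ)) = s * s ^ (-(n:ℝ)) := by
    rw [sub_eq_add_neg, Real.rpow_add hspos, Real.rpow_one]
  rw [h1, hs]; ring

lemma integrable_aux (d : ℕ) (k : ℝ) (hk : (d:ℝ) < 2*k) :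
    Integrable (fun y : EuclideanSpace ℝ (Fin d) => (1 + ‖y‖^2) ^ (-k)) := by
  have h := integrable_rpow_neg_one_add_norm_sq
    (E := EuclideanSpace ℝ (Fin d)) (μ := volume) (r := 2*k)
    (by rw [finrank_euclideanSpace_fin]; exact hk)
  have : -(2*k)/2 = -k := by ring
  simpa [this] using h

open Set in
lemma cont_aux (d : ℕ) (q : ℝ) : Continuous (fun r : ℝ => r^(d-1) * (1+r^2)^(-q)) := by
  apply Continuous.mul (continuous_pow _)
  apply Continuous.rpow_const (by continuity)
  intro x; left; positivity

open Set in
lemma oneD_int (d : ℕ) (hd : 1 ≤ d) (q : ℝ) (hq : (d:ℝ) < 2*q) :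
    IntegrableOn (fun r : ℝ => r^(d-1) * (1+r^2)^(-q)) (Ioi 0) := by
  have hcont := cont_aux d q
  rw [← Ioc_union_Ioi_eq_Ioi (zero_le_one' ℝ)]
  apply IntegrableOn.union
  · exact (hcont.continuousOn.integrableOn_compact isCompact_Icc).mono_set Ioc_subset_Icc_self
  · have hq0 : 0 < q := by
      have : (0:ℝ) ≤ d := Nat.cast_nonneg d
      linarith
    have hexp : (d:ℝ) - 1 - 2*q < -1 := by linarith
    refine Integrable.mono' (g := fun x : ℝ => x ^ ((d:ℝ) - 1 - 2*q))
      (integrableOn_Ioi_rpow_of_lt hexp one_pos)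
      (hcont.aestronglyMeasurable.restrict) ?_
    filter_upwards [ae_restrict_mem measurableSet_Ioi] with x (hx : 1 < x)
    have hx0 : 0 < x := lt_trans one_pos hx
    have h1 : ‖x^(d-1) * (1+x^2)^(-q)‖ = x^(d-1) * (1+x^2)^(-q) := by
      rw [Real.norm_eq_abs, abs_of_nonneg]; positivity
    rw [h1]
    have h2 : (1+x^2)^(-q) ≤ (x^2)^(-q) :=
      Real.rpow_le_rpow_of_nonpos (by positivity) (by linarith) (by linarith)
    calc x^(d-1) * (1+x^2)^(-q) ≤ x^(d-1) * (x^2)^(-q) := by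
          apply mul_le_mul_of_nonneg_left h2 (by positivity)
      _ = x ^ ((d:ℝ) - 1 - 2*q) := by
          rw [← Real.rpow_natCast x (d-1), ← Real.rpow_natCast x 2,
            ← Real.rpow_mul hx0.le, ← Real.rpow_add hx0]
          congr 1
          push_cast [Nat.cast_sub hd]
          ring

open Set in
lemma oneD_rec (d : ℕ) (hd : 1 ≤ d) (k : ℝ) (hk : (d:ℝ) < 2*k) :
    ∫ r in Ioi (0:ℝ), r^(d-1) * (1+r^2)^(-(k+1))
      = ((2*k - d)/(2*k)) * ∫ r in Ioi (0:ℝ), r^(d-1) * (1+r^2)^(-k) := by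
  have hk0 : 0 < k := by
    have : (0:ℝ) < d := by exact_mod_cast hd
    linarith
  set g : ℝ → ℝ := fun r => r^d * (1+r^2)^(-k) with hg
  set g' : ℝ → ℝ := fun r => (d:ℝ) * (r^(d-1) * (1+r^2)^(-k))
      - 2*k*(r^(d-1)*(1+r^2)^(-k) - r^(d-1)*(1+r^2)^(-(k+1))) with hg'
  have hderiv : ∀ x ∈ Ioi (0:ℝ), HasDerivAt g (g' x) x := by
    intro x hx
    have hx0 : (0:ℝ) < x := hx
    have hs : (0:ℝ) < 1 + x^2 := by positivity
    have hbase : HasDerivAt (fun r : ℝ => 1 + r^2) (2*x) x := by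
      simpa using (hasDerivAt_pow 2 x).const_add (1:ℝ)
    have hrpow : HasDerivAt (fun u : ℝ => u^(-k)) (-k * (1+x^2)^(-k-1)) (1+x^2) :=
      Real.hasDerivAt_rpow_const (Or.inl hs.ne')
    have hcomp := hrpow.comp x hbase
    have hmul := (hasDerivAt_pow d x).mul hcomp
    convert hmul using 1
    show g' x = _
    have e1 : (1+x^2)^(-k) = (1+x^2) * (1+x^2)^(-(k+1)) := by
      rw [show -k = 1 + (-(k+1)) by ring, Real.rpow_add hs, Real.rpow_one]
    have e2 : (1+x^2)^(-k-1) = (1+x^2)^(-(k+1)) := by ring_nf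
    have e3 : x^d = x^(d-1) * x := by
      conv_lhs => rw [show d = (d-1)+1 from (Nat.succ_pred_eq_of_pos hd).symm]
      rw [pow_succ]
    simp only [hg', Function.comp_apply]
    rw [e1, e2, e3]
    ring
    all_goals rfl
  have hgcont : Continuous g := by
    apply Continuous.mul (continuous_pow _)
    apply Continuous.rpow_const (by continuity)
    intro x; left; positivity
  have hA := oneD_int d hd k hk
  have hB := oneD_int d hd (k+1) (by linarith : (d:ℝ) < 2*(k+1))
  have hAB : IntegrableOn
      (fun r : ℝ => r^(d-1)*(1+r^2)^(-k) - r^(d-1)*(1+r^2)^(-(k+1))) (Ioi (0:ℝ)) := hA.sub hB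
  have hint : IntegrableOn g' (Ioi (0:ℝ)) := by
    exact (hA.const_mul _).sub (hAB.const_mul _)
  have htend : Filter.Tendsto g Filter.atTop (nhds 0) := by
    apply squeeze_zero' (g := fun x : ℝ => x ^ ((d:ℝ) - 2*k))
    · filter_upwards [Filter.eventually_ge_atTop (1:ℝ)] with x hx
      have : (0:ℝ) < x := lt_of_lt_of_le one_pos hx
      positivity
    · filter_upwards [Filter.eventually_ge_atTop (1:ℝ)] with x hx
      have hx0 : (0:ℝ) < x := lt_of_lt_of_le one_pos hx
      have h2 : (1+x^2)^(-k) ≤ (x^2)^(-k) :=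
        Real.rpow_le_rpow_of_nonpos (by positivity) (by linarith) (by linarith)
      calc x^d * (1+x^2)^(-k) ≤ x^d * (x^2)^(-k) :=
            mul_le_mul_of_nonneg_left h2 (by positivity)
        _ = x ^ ((d:ℝ) - 2*k) := by
            rw [← Real.rpow_natCast x d, ← Real.rpow_natCast x 2,
              ← Real.rpow_mul hx0.le, ← Real.rpow_add hx0]
            congr 1; ring
    · have := tendsto_rpow_neg_atTop (y := 2*k - (d:ℝ)) (by linarith)
      simpa [neg_sub] using this
  have h0 : ∫ x in Ioi (0:ℝ), g' x = 0 - g 0 :=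
    integral_Ioi_of_hasDerivAt_of_tendsto (hgcont.continuousWithinAt) hderiv hint htend
  have hg0 : g 0 = 0 := by
    simp [hg, zero_pow (by omega : d ≠ 0)]
  rw [hg0, sub_zero] at h0
  have hexp : ∫ x in Ioi (0:ℝ), g' x
      = (d:ℝ) * (∫ r in Ioi (0:ℝ), r^(d-1) * (1+r^2)^(-k))
        - 2*k*((∫ r in Ioi (0:ℝ), r^(d-1) * (1+r^2)^(-k))
          - ∫ r in Ioi (0:ℝ), r^(d-1) * (1+r^2)^(-(k+1))) := by
    simp only [hg']
    rw [integral_sub (hA.const_mul _) (hAB.const_mul _),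
      integral_const_mul, integral_const_mul, integral_sub hA hB]
  rw [hexp] at h0
  have h2k : (2*k) ≠ 0 := by positivity
  set B0 : ℝ := ∫ r in Ioi (0:ℝ), r^(d-1) * (1+r^2)^(-k) with hB0
  set B1 : ℝ := ∫ r in Ioi (0:ℝ), r^(d-1) * (1+r^2)^(-(k+1)) with hB1v
  rw [div_mul_eq_mul_div, eq_div_iff h2k]
  linarith

open Set in
lemma ddim_rec (d : ℕ) (hd : 1 ≤ d) (k : ℝ) (hk : (d:ℝ) < 2*k) :
    ∫ y : EuclideanSpace ℝ (Fin d), (1+‖y‖^2)^(-(k+1))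
      = ((2*k - d)/(2*k)) * ∫ y : EuclideanSpace ℝ (Fin d), (1+‖y‖^2)^(-k) := by
  haveI : Nontrivial (EuclideanSpace ℝ (Fin d)) :=
    Module.nontrivial_of_finrank_pos (R := ℝ) (by rw [finrank_euclideanSpace_fin]; omega)
  have hrad : ∀ q : ℝ, ∫ y : EuclideanSpace ℝ (Fin d), (1+‖y‖^2)^(-q)
      = d * ((volume (Metric.ball (0:EuclideanSpace ℝ (Fin d)) 1)).toReal
          * ∫ r in Ioi (0:ℝ), r^(d-1) * (1+r^2)^(-q)) := by
    intro q
    have := integral_fun_norm_addHaar (volume : Measure (EuclideanSpace ℝ (Fin d)))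
      (fun r : ℝ => (1+r^2)^(-q))
    rw [finrank_euclideanSpace_fin] at this
    simpa [smul_eq_mul, mul_assoc, Measure.real] using this
  rw [hrad, hrad, oneD_rec d hd k hk]
  ring

lemma shifted_integrable (d : ℕ) (q : ℝ) (hq : (d:ℝ) < 2*q) {a : ℝ} (ha : 1 ≤ a) :
    Integrable (fun y : EuclideanSpace ℝ (Fin d) => (‖y‖^2 + a^2)^(-q)) := by
  have hq0 : 0 < q := by
    have : (0:ℝ) ≤ d := Nat.cast_nonneg d
    linarith
  refine (integrable_aux d q hq).mono' ?_ ?_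
  · apply Continuous.aestronglyMeasurable
    apply Continuous.rpow_const (by continuity)
    intro y; left; positivity
  · filter_upwards with y
    have h1 : (0:ℝ) < ‖y‖^2 + a^2 := by positivity
    rw [Real.norm_eq_abs, abs_of_nonneg (Real.rpow_nonneg h1.le _)]
    apply Real.rpow_le_rpow_of_nonpos (by positivity) (by nlinarith [norm_nonneg y]) (by linarith)

lemma scaling (d : ℕ) (q : ℝ) {a : ℝ} (ha : 0 < a) :
    ∫ y : EuclideanSpace ℝ (Fin d), (‖y‖^2 + a^2)^(-q)
      = a^((d:ℝ) - 2*q) * ∫ y : EuclideanSpace ℝ (Fin d), (1+‖y‖^2)^(-q) := by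
  have key := MeasureTheory.Measure.integral_comp_inv_smul_of_nonneg
    (volume : Measure (EuclideanSpace ℝ (Fin d)))
    (fun y : EuclideanSpace ℝ (Fin d) => (1+‖y‖^2)^(-q)) ha.le
  rw [finrank_euclideanSpace_fin] at key
  have hpt : ∀ y : EuclideanSpace ℝ (Fin d),
      (‖y‖^2 + a^2)^(-q) = (a^2:ℝ)^(-q) * (1+‖a⁻¹ • y‖^2)^(-q) := by
    intro y
    have h1 : ‖a⁻¹ • y‖^2 = a⁻¹^2 * ‖y‖^2 := by
      rw [norm_smul, Real.norm_eq_abs, abs_of_nonneg (by positivity), mul_pow]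
    rw [h1, ← Real.mul_rpow (by positivity) (by positivity)]
    congr 1
    field_simp
    ring
  calc ∫ y : EuclideanSpace ℝ (Fin d), (‖y‖^2 + a^2)^(-q)
      = ∫ y : EuclideanSpace ℝ (Fin d), (a^2:ℝ)^(-q) * (1+‖a⁻¹ • y‖^2)^(-q) := by
        congr 1; ext y; exact hpt y
    _ = (a^2:ℝ)^(-q) * ∫ y : EuclideanSpace ℝ (Fin d), (1+‖a⁻¹ • y‖^2)^(-q) :=
        integral_const_mul _ _
    _ = (a^2:ℝ)^(-q) * (a^d * ∫ y : EuclideanSpace ℝ (Fin d), (1+‖y‖^2)^(-q)) := by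
        rw [key, smul_eq_mul]
    _ = a^((d:ℝ) - 2*q) * ∫ y : EuclideanSpace ℝ (Fin d), (1+‖y‖^2)^(-q) := by
        rw [← Real.rpow_natCast a 2, ← Real.rpow_natCast a d, ← Real.rpow_mul ha.le,
          ← mul_assoc, ← Real.rpow_add ha]
        ring_nf

open Set in
lemma outer_int (n : ℕ) (hn : 4 ≤ n) :
    ∫ t in Ioi (0:ℝ), t * (1+t)^(1-(n:ℝ))
      = 1/(((n:ℝ)-3)*((n:ℝ)-2)) := by
  have hn4 : (4:ℝ) ≤ (n:ℝ) := by exact_mod_cast hn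
  set G : ℝ → ℝ := fun t => (1+t)^(3-(n:ℝ))/(3-(n:ℝ)) - (1+t)^(2-(n:ℝ))/(2-(n:ℝ)) with hG
  have hderiv : ∀ x ∈ Ici (0:ℝ), HasDerivAt G (x * (1+x)^(1-(n:ℝ))) x := by
    intro x hx
    have hx0 : (0:ℝ) ≤ x := hx
    have hs : (0:ℝ) < 1 + x := by linarith
    have hbase : HasDerivAt (fun t : ℝ => 1 + t) 1 x := by
      simpa using (hasDerivAt_id x).const_add (1:ℝ)
    have h1 : HasDerivAt (fun t : ℝ => (1+t)^(3-(n:ℝ)))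
        ((3-(n:ℝ)) * (1+x)^(2-(n:ℝ))) x := by
      have := (Real.hasDerivAt_rpow_const (x := 1+x) (p := 3-(n:ℝ))
        (Or.inl hs.ne')).comp x hbase
      simpa [show (3-(n:ℝ)) - 1 = 2-(n:ℝ) by ring, Function.comp_def] using this
    have h2 : HasDerivAt (fun t : ℝ => (1+t)^(2-(n:ℝ)))
        ((2-(n:ℝ)) * (1+x)^(1-(n:ℝ))) x := by
      have := (Real.hasDerivAt_rpow_const (x := 1+x) (p := 2-(n:ℝ))
        (Or.inl hs.ne')).comp x hbase
      simpa [show (2-(n:ℝ)) - 1 = 1-(n:ℝ) by ring, Function.comp_def] using this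
    have h3 := (h1.div_const (3-(n:ℝ))).sub (h2.div_const (2-(n:ℝ)))
    have e1 : (1+x)^(2-(n:ℝ)) = (1+x) * (1+x)^(1-(n:ℝ)) := by
      rw [show 2-(n:ℝ) = 1 + (1-(n:ℝ)) by ring, Real.rpow_add hs, Real.rpow_one]
    have hv : (3-(n:ℝ)) * (1+x)^(2-(n:ℝ))/(3-(n:ℝ)) - (2-(n:ℝ)) * (1+x)^(1-(n:ℝ))/(2-(n:ℝ))
        = x * (1+x)^(1-(n:ℝ)) := by
      rw [e1]
      field_simp [show (3-(n:ℝ)) ≠ 0 by linarith, show (2-(n:ℝ)) ≠ 0 by linarith]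
      ring
    rw [← hv]
    exact h3
  have hnonneg : ∀ x ∈ Ioi (0:ℝ), 0 ≤ x * (1+x)^(1-(n:ℝ)) := by
    intro x hx
    have : (0:ℝ) < x := hx
    positivity
  have htend : Filter.Tendsto G Filter.atTop (nhds 0) := by
    have hb : Filter.Tendsto (fun t : ℝ => 1 + t) Filter.atTop Filter.atTop :=
      Filter.tendsto_atTop_add_const_left _ 1 Filter.tendsto_id
    have t1 : Filter.Tendsto (fun t : ℝ => (1+t)^(3-(n:ℝ))) Filter.atTop (nhds 0) := by
      have := (tendsto_rpow_neg_atTop (y := (n:ℝ)-3) (by linarith)).comp hb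
      simpa [show -((n:ℝ)-3) = 3-(n:ℝ) by ring, Function.comp_def] using this
    have t2 : Filter.Tendsto (fun t : ℝ => (1+t)^(2-(n:ℝ))) Filter.atTop (nhds 0) := by
      have := (tendsto_rpow_neg_atTop (y := (n:ℝ)-2) (by linarith)).comp hb
      simpa [show -((n:ℝ)-2) = 2-(n:ℝ) by ring, Function.comp_def] using this
    have := (t1.div_const (3-(n:ℝ))).sub (t2.div_const (2-(n:ℝ)))
    simpa using this
  have hint : IntegrableOn (fun x : ℝ => x * (1+x)^(1-(n:ℝ))) (Ioi (0:ℝ)) :=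
    integrableOn_Ioi_deriv_of_nonneg' hderiv hnonneg htend
  rw [integral_Ioi_of_hasDerivAt_of_tendsto' hderiv hint htend]
  rw [hG]
  simp only [add_zero, Real.one_rpow]
  have e2 : ((n:ℝ)-3) ≠ 0 := by linarith
  have e3 : ((n:ℝ)-2) ≠ 0 := by linarith
  field_simp [show (3-(n:ℝ)) ≠ 0 by linarith, show (2-(n:ℝ)) ≠ 0 by linarith, e2, e3]
  ring

lemma cast_dm (n : ℕ) (hn : 4 ≤ n) : ((n-1 : ℕ):ℝ) = (n:ℝ) - 1 := by
  have : 1 ≤ n := by omega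
  push_cast [Nat.cast_sub this]
  ring

lemma inner_grad (n : ℕ) (hn : 4 ≤ n) {t : ℝ} (ht : 0 < t) :
    ∫ y : EuclideanSpace ℝ (Fin (n-1)), t * (tanGradSq n y t + normDerSq n y t)
      = ((n:ℝ)-2)^2 * (∫ y : EuclideanSpace ℝ (Fin (n-1)), (1+‖y‖^2)^(-((n:ℝ)-1)))
          * (t * (1+t)^(1-(n:ℝ))) := by
  have hn4 : (4:ℝ) ≤ (n:ℝ) := by exact_mod_cast hn
  have ha : (0:ℝ) < 1 + t := by linarith
  calc ∫ y : EuclideanSpace ℝ (Fin (n-1)), t * (tanGradSq n y t + normDerSq n y t)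
      = ∫ y : EuclideanSpace ℝ (Fin (n-1)),
          (t * ((n:ℝ)-2)^2) * (‖y‖^2+(1+t)^2)^(-((n:ℝ)-1)) := by
        congr 1; ext y
        rw [gradSq_eq n y ht, show -((n:ℝ)-1) = 1 - (n:ℝ) by ring]
        ring
    _ = (t * ((n:ℝ)-2)^2) * ∫ y : EuclideanSpace ℝ (Fin (n-1)),
          (‖y‖^2+(1+t)^2)^(-((n:ℝ)-1)) := integral_const_mul _ _
    _ = (t * ((n:ℝ)-2)^2) * ((1+t)^(((n-1:ℕ):ℝ) - 2*((n:ℝ)-1))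
          * ∫ y : EuclideanSpace ℝ (Fin (n-1)), (1+‖y‖^2)^(-((n:ℝ)-1))) := by
        rw [scaling (n-1) ((n:ℝ)-1) ha]
    _ = _ := by
        rw [cast_dm n hn, show (n:ℝ)-1 - 2*((n:ℝ)-1) = 1 - (n:ℝ) by ring]
        ring

lemma inner_tan (n : ℕ) (hn : 4 ≤ n) {t : ℝ} (ht : 0 < t) :
    ∫ y : EuclideanSpace ℝ (Fin (n-1)), t * tanGradSq n y t
      = ((n:ℝ)-2)^2 * ((∫ y : EuclideanSpace ℝ (Fin (n-1)), (1+‖y‖^2)^(-((n:ℝ)-1)))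
          - ∫ y : EuclideanSpace ℝ (Fin (n-1)), (1+‖y‖^2)^(-(n:ℝ)))
          * (t * (1+t)^(1-(n:ℝ))) := by
  have hn4 : (4:ℝ) ≤ (n:ℝ) := by exact_mod_cast hn
  have ha : (0:ℝ) < 1 + t := by linarith
  have ha1 : (1:ℝ) ≤ 1 + t := by linarith
  have hc1 : ((n-1 : ℕ):ℝ) < 2*((n:ℝ)-1) := by rw [cast_dm n hn]; linarith
  have hc2 : ((n-1 : ℕ):ℝ) < 2*(n:ℝ) := by rw [cast_dm n hn]; linarith
  have hA := shifted_integrable (n-1) ((n:ℝ)-1) hc1 ha1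
  have hB := shifted_integrable (n-1) ((n:ℝ)) hc2 ha1
  calc ∫ y : EuclideanSpace ℝ (Fin (n-1)), t * tanGradSq n y t
      = ∫ y : EuclideanSpace ℝ (Fin (n-1)),
          (t * ((n:ℝ)-2)^2) * ((‖y‖^2+(1+t)^2)^(-((n:ℝ)-1))
            - (1+t)^2 * (‖y‖^2+(1+t)^2)^(-(n:ℝ))) := by
        congr 1; ext y
        rw [tanGradSq_eq n y ht]
        have hspos : (0:ℝ) < ‖y‖^2+(1+t)^2 := by positivity
        have e1 : (‖y‖^2+(1+t)^2)^(-((n:ℝ)-1))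
            = (‖y‖^2+(1+t)^2) * (‖y‖^2+(1+t)^2)^(-(n:ℝ)) := by
          rw [show -((n:ℝ)-1) = 1 + -(n:ℝ) by ring, Real.rpow_add hspos, Real.rpow_one]
        rw [e1]
        ring
    _ = (t * ((n:ℝ)-2)^2) * ((∫ y : EuclideanSpace ℝ (Fin (n-1)),
            (‖y‖^2+(1+t)^2)^(-((n:ℝ)-1)))
          - (1+t)^2 * ∫ y : EuclideanSpace ℝ (Fin (n-1)), (‖y‖^2+(1+t)^2)^(-(n:ℝ))) := by
        rw [integral_const_mul, integral_sub hA (hB.const_mul _), integral_const_mul]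
    _ = (t * ((n:ℝ)-2)^2) * (((1+t)^(((n-1:ℕ):ℝ) - 2*((n:ℝ)-1))
            * ∫ y : EuclideanSpace ℝ (Fin (n-1)), (1+‖y‖^2)^(-((n:ℝ)-1)))
          - (1+t)^2 * ((1+t)^(((n-1:ℕ):ℝ) - 2*(n:ℝ))
            * ∫ y : EuclideanSpace ℝ (Fin (n-1)), (1+‖y‖^2)^(-(n:ℝ)))) := by
        rw [scaling (n-1) ((n:ℝ)-1) ha, scaling (n-1) ((n:ℝ)) ha]
    _ = _ := by
        rw [cast_dm n hn, show (n:ℝ)-1 - 2*((n:ℝ)-1) = 1 - (n:ℝ) by ring]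
        have e2 : ((1+t):ℝ)^2 * (1+t)^((n:ℝ)-1 - 2*(n:ℝ)) = (1+t)^(1-(n:ℝ)) := by
          rw [← Real.rpow_natCast (1+t) 2, ← Real.rpow_add ha]
          congr 1
          push_cast
          ring
        rw [← mul_assoc ((1+t)^2) _ _, e2]
        ring

open Set in
/-- Value and strict positivity of the first-order conformal coefficient:
`(2/(n−1))·G_tan − G + ((n−2)/2)·Θ = ((n−2)²/(2(n−1)))·Θ > 0` for `n ≥ 4`. -/
theorem first_order_conformal_coefficient (n : ℕ) (hn : 4 ≤ n) (Gtan G Θ : ℝ)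
    (hGtan : Gtan = ∫ t in Set.Ioi (0 : ℝ),
      ∫ y : EuclideanSpace ℝ (Fin (n - 1)), t * tanGradSq n y t)
    (hG : G = ∫ t in Set.Ioi (0 : ℝ),
      ∫ y : EuclideanSpace ℝ (Fin (n - 1)), t * gradSq n y t)
    (hΘ : Θ = ∫ y : EuclideanSpace ℝ (Fin (n - 1)), (1 + ‖y‖ ^ 2) ^ (-((n : ℝ) - 2))) :
    ((2 / ((n : ℝ) - 1)) * Gtan - G + (((n : ℝ) - 2) / 2) * Θ
        = (((n : ℝ) - 2) ^ 2 / (2 * ((n : ℝ) - 1))) * Θ)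
    ∧ 0 < (((n : ℝ) - 2) ^ 2 / (2 * ((n : ℝ) - 1))) * Θ := by
  have hn4 : (4:ℝ) ≤ (n:ℝ) := by exact_mod_cast hn
  have hd1 : 1 ≤ n - 1 := by omega
  have hne1 : ((n:ℝ) - 1) ≠ 0 := by linarith
  have hne2 : ((n:ℝ) - 2) ≠ 0 := by linarith
  have hne3 : ((n:ℝ) - 3) ≠ 0 := by linarith
  -- recurrences
  have rec1 : (∫ y : EuclideanSpace ℝ (Fin (n-1)), (1+‖y‖^2)^(-((n:ℝ)-1)))
      = ((2*((n:ℝ)-2) - (((n:ℝ))-1))/(2*((n:ℝ)-2)))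
        * ∫ y : EuclideanSpace ℝ (Fin (n-1)), (1+‖y‖^2)^(-((n:ℝ)-2)) := by
    have h := ddim_rec (n-1) hd1 ((n:ℝ)-2) (by rw [cast_dm n hn]; linarith)
    rw [cast_dm n hn] at h
    simpa [show ((n:ℝ)-2)+1 = (n:ℝ)-1 by ring] using h
  have rec2 : (∫ y : EuclideanSpace ℝ (Fin (n-1)), (1+‖y‖^2)^(-(n:ℝ)))
      = ((2*((n:ℝ)-1) - (((n:ℝ))-1))/(2*((n:ℝ)-1)))
        * ∫ y : EuclideanSpace ℝ (Fin (n-1)), (1+‖y‖^2)^(-((n:ℝ)-1)) := by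
    have h := ddim_rec (n-1) hd1 ((n:ℝ)-1) (by rw [cast_dm n hn]; linarith)
    rw [cast_dm n hn] at h
    simpa [show ((n:ℝ)-1)+1 = (n:ℝ) by ring] using h
  -- values of Gtan and G
  have hGtan' : Gtan = ((n:ℝ)-2)^2
      * ((∫ y : EuclideanSpace ℝ (Fin (n-1)), (1+‖y‖^2)^(-((n:ℝ)-1)))
        - ∫ y : EuclideanSpace ℝ (Fin (n-1)), (1+‖y‖^2)^(-(n:ℝ)))
      * (1/(((n:ℝ)-3)*((n:ℝ)-2))) := by
    rw [hGtan, setIntegral_congr_fun measurableSet_Ioi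
      (fun t (ht : t ∈ Ioi (0:ℝ)) => inner_tan n hn ht), integral_const_mul,
      outer_int n hn]
  have hG' : G = ((n:ℝ)-2)^2
      * (∫ y : EuclideanSpace ℝ (Fin (n-1)), (1+‖y‖^2)^(-((n:ℝ)-1)))
      * (1/(((n:ℝ)-3)*((n:ℝ)-2))) := by
    simp only [gradSq] at hG
    rw [hG, setIntegral_congr_fun measurableSet_Ioi
      (fun t (ht : t ∈ Ioi (0:ℝ)) => inner_grad n hn ht), integral_const_mul,
      outer_int n hn]
  -- positivity of Θ
  have hΘint := integrable_aux (n-1) ((n:ℝ)-2) (by rw [cast_dm n hn]; linarith)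
  have hΘpos : 0 < Θ := by
    rw [hΘ]
    rw [integral_pos_iff_support_of_nonneg
      (fun y => Real.rpow_nonneg (by positivity) _) hΘint]
    have hsupp : (Function.support fun y : EuclideanSpace ℝ (Fin (n-1)) =>
        (1 + ‖y‖ ^ 2) ^ (-((n:ℝ) - 2))) = Set.univ := by
      ext y
      simp only [Function.mem_support, Set.mem_univ, iff_true]
      positivity
    rw [hsupp]
    exact IsOpen.measure_pos volume isOpen_univ univ_nonempty
  constructor
  · rw [hGtan', hG', rec2, rec1, hΘ.symm] at *
    field_simp
    ring
  · apply mul_pos _ hΘpos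
    apply div_pos (by positivity) (by linarith)
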